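/- arXiv:1605.05724 — 5 statements merged into one kernel-verified Lean document; each statement's English description precedes it below -/
import Mathlib

section
/- Let C be a conjugation on a complex Hilbert space H and h, g ∈ H. If for every skew-C symmetric operator T one has ⟨Th, Cg⟩ = 0, then h and g are linearly dependent. Consequently every rank-one operator annihilating all skew-C symmetric operators has the form α·(h ⊗ Ch) for some h ∈ H and α ∈ ℂ. -/
open scoped InnerProductSpace ComplexConjugate

/-- The rank-one operator `x ⊗ y`, acting by `z ↦ ⟨z, y⟩ • x`. -/
noncomputable def rankOne {H : Type*} [NormedAddCommGroup H] [InnerProductSpace ℂ H]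
    (x y : H) : H →L[ℂ] H :=
  (ContinuousLinearMap.toSpanSingleton ℂ x).comp (innerSL ℂ y)

/-!
The annihilation hypothesis is tested on the operators `C b ⊗ a - C a ⊗ b`, which are
skew-`C` symmetric for all `a, b`. Because `C` is an isometric involution, it then reads
`⟪a, h⟫ ⟪b, g⟫ = ⟪b, h⟫ ⟪a, g⟫`, and taking `a = h` gives `⟪h, h⟫ g = ⟪h, g⟫ h`.
For the rank-one operator `x ⊗ y` this applies to `h = x`, `g = C y`, so `C y ∈ ℂ x`.
-/

section InnerProduct

variable {𝕜 E : Type*} [RCLike 𝕜] [NormedAddCommGroup E] [InnerProductSpace 𝕜 E]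

lemma inner_self_smul_eq_of_inner_mul_inner_comm {h g : E}
    (hhg : ∀ a b : E, ⟪a, h⟫_𝕜 * ⟪b, g⟫_𝕜 = ⟪b, h⟫_𝕜 * ⟪a, g⟫_𝕜) :
    ⟪h, h⟫_𝕜 • g = ⟪h, g⟫_𝕜 • h := by
  refine ext_inner_left 𝕜 fun b => ?_
  rw [inner_smul_right, inner_smul_right]
  linear_combination hhg h b

lemma not_linearIndependent_of_inner_self_smul_eq {h g : E}
    (hhg : ⟪h, h⟫_𝕜 • g = ⟪h, g⟫_𝕜 • h) :
    ¬ LinearIndependent 𝕜 ![h, g] := by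
  intro hli
  have hh : h ≠ 0 := by simpa using hli.ne_zero 0
  have hcomb : (-⟪h, g⟫_𝕜) • h + ⟪h, h⟫_𝕜 • g = 0 := by
    rw [hhg, neg_smul, neg_add_cancel]
  exact hh (inner_self_eq_zero.mp (LinearIndependent.pair_iff.mp hli _ _ hcomb).2)

lemma eq_smul_of_inner_self_smul_eq {h g : E} (hh : h ≠ 0)
    (hhg : ⟪h, h⟫_𝕜 • g = ⟪h, g⟫_𝕜 • h) :
    g = (⟪h, g⟫_𝕜 / ⟪h, h⟫_𝕜) • h := by
  rw [div_eq_inv_mul, mul_smul, ← hhg, inv_smul_smul₀ (inner_self_ne_zero.mpr hh)]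

end InnerProduct

section RankOne

variable {H : Type*} [NormedAddCommGroup H] [InnerProductSpace ℂ H]

lemma rankOne_apply (x y z : H) : rankOne x y z = ⟪y, z⟫_ℂ • x := rfl

lemma rankOne_zero_left (y : H) : rankOne 0 y = 0 := by
  ext z
  simp [rankOne_apply]

lemma rankOne_smul_right (x y : H) (c : ℂ) : rankOne x (c • y) = conj c • rankOne x y := by
  ext z
  simp [rankOne_apply, smul_smul, mul_comm]

lemma adjoint_rankOne [CompleteSpace H] (x y : H) :
    ContinuousLinearMap.adjoint (rankOne x y) = rankOne y x := by
  refine ((ContinuousLinearMap.eq_adjoint_iff _ _).mpr fun u v => ?_).symm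
  simp only [rankOne_apply, inner_smul_left, inner_smul_right, inner_conj_symm]
  ring

end RankOne

section SkewCSymmetric

variable {H : Type*} [NormedAddCommGroup H] [InnerProductSpace ℂ H] [CompleteSpace H]

def IsSkewCSymmetric (C : H → H) (T : H →L[ℂ] H) : Prop :=
  ∀ z, C (T (C z)) = -(ContinuousLinearMap.adjoint T) z

variable (C : H →ₗ⋆[ℂ] H) (hCinner : ∀ x y : H, ⟪C x, C y⟫_ℂ = ⟪y, x⟫_ℂ)
  (hCinv : ∀ x, C (C x) = x)
include hCinner hCinv

lemma isSkewCSymmetric_rankOne_sub_rankOne (a b : H) :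
    IsSkewCSymmetric C (rankOne (C b) a - rankOne (C a) b) := by
  intro z
  have hconj : ∀ u, conj ⟪u, C z⟫_ℂ = ⟪C u, z⟫_ℂ := fun u => by
    rw [inner_conj_symm, ← hCinner, hCinv]
  simp only [map_sub, adjoint_rankOne, sub_apply, rankOne_apply,
    LinearMap.map_smulₛₗ, hCinv, hconj]
  abel

lemma inner_self_smul_eq_of_forall_isSkewCSymmetric {h g : H}
    (hann : ∀ T : H →L[ℂ] H, IsSkewCSymmetric C T → ⟪C g, T h⟫_ℂ = 0) :
    ⟪h, h⟫_ℂ • g = ⟪h, g⟫_ℂ • h := by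
  refine inner_self_smul_eq_of_inner_mul_inner_comm fun a b => ?_
  have hab := hann _ (isSkewCSymmetric_rankOne_sub_rankOne C hCinner hCinv a b)
  simp only [sub_apply, rankOne_apply, inner_sub_right, inner_smul_right,
    hCinner] at hab
  linear_combination hab

end SkewCSymmetric

theorem stmt4 {H : Type*} [NormedAddCommGroup H] [InnerProductSpace ℂ H] [CompleteSpace H]
    (C : H → H)
    (hCadd : ∀ x y, C (x + y) = C x + C y)
    (hCsmul : ∀ (a : ℂ) (x : H), C (a • x) = (starRingEnd ℂ) a • C x)
    (hCinner : ∀ x y : H, ⟪C x, C y⟫_ℂ = ⟪y, x⟫_ℂ)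
    (hCinv : ∀ x, C (C x) = x)
    (h g : H)
    (hann : ∀ T : H →L[ℂ] H,
      (∀ z, C (T (C z)) = -(ContinuousLinearMap.adjoint T) z) → ⟪C g, T h⟫_ℂ = 0) :
    ¬ LinearIndependent ℂ ![h, g] ∧
      ∀ x y : H,
        (∀ T : H →L[ℂ] H,
            (∀ z, C (T (C z)) = -(ContinuousLinearMap.adjoint T) z) → ⟪y, T x⟫_ℂ = 0) →
          ∃ (α : ℂ) (w : H), rankOne x y = α • rankOne w (C w) := by
  let C' : H →ₗ⋆[ℂ] H := { toFun := C, map_add' := hCadd, map_smul' := hCsmul }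
  have key : ∀ {u v : H}, (∀ T, IsSkewCSymmetric C T → ⟪C v, T u⟫_ℂ = 0) →
      ⟪u, u⟫_ℂ • v = ⟪u, v⟫_ℂ • u :=
    inner_self_smul_eq_of_forall_isSkewCSymmetric C' hCinner hCinv
  refine ⟨not_linearIndependent_of_inner_self_smul_eq (key hann), fun x y hxy => ?_⟩
  rcases eq_or_ne x 0 with rfl | hx
  · exact ⟨0, 0, by rw [rankOne_zero_left, rankOne_zero_left, smul_zero]⟩
  have hCy : C y = (⟪x, C y⟫_ℂ / ⟪x, x⟫_ℂ) • x :=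
    eq_smul_of_inner_self_smul_eq hx (key fun T hT => by rw [hCinv]; exact hxy T hT)
  refine ⟨⟪x, C y⟫_ℂ / ⟪x, x⟫_ℂ, x, ?_⟩
  conv_lhs => rw [← hCinv y, hCy, hCsmul, rankOne_smul_right, Complex.conj_conj]
end

section
/- Let C be a conjugation on a complex Hilbert space H and T ∈ B(H). If ⟨Th, Ch⟩ = 0 for all h ∈ H, then CTC = −T*. Thus the subspace of skew-C symmetric operators is reflexive: an operator annihilated by all rank-one operators h ⊗ Ch is itself skew-C symmetric. -/
/-! The form `(a, b) ↦ ⟪C a, T b⟫` is biadditive and vanishes on the diagonal, hence is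
skew-symmetric; since `⟪C u, v⟫ = ⟪C v, u⟫`, this skew-symmetry is exactly `⟪C T C x, v⟫ = -⟪T* x, v⟫`. -/

open scoped InnerProductSpace ComplexConjugate

section Conjugation

variable {H : Type*} [NormedAddCommGroup H] [InnerProductSpace ℂ H] {C : H → H}

theorem inner_map_left_symm (hCinner : ∀ x y : H, ⟪C x, C y⟫_ℂ = ⟪y, x⟫_ℂ)
    (hCinv : ∀ x, C (C x) = x) (u v : H) : ⟪C u, v⟫_ℂ = ⟪C v, u⟫_ℂ := by
  rw [← hCinner u (C v), hCinv]

theorem inner_map_left_apply_add_swap_eq_zero (hCadd : ∀ x y, C (x + y) = C x + C y)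
    (T : H →L[ℂ] H) (hT : ∀ h : H, ⟪C h, T h⟫_ℂ = 0) (a b : H) :
    ⟪C a, T b⟫_ℂ + ⟪C b, T a⟫_ℂ = 0 := by
  have h := hT (a + b)
  rw [hCadd, map_add, inner_add_left, inner_add_right, inner_add_right, hT a, hT b] at h
  linear_combination h

end Conjugation

theorem stmt7_general {H : Type*} [NormedAddCommGroup H] [InnerProductSpace ℂ H] [CompleteSpace H]
    (C : H → H)
    (hCadd : ∀ x y, C (x + y) = C x + C y)
    (hCinner : ∀ x y : H, ⟪C x, C y⟫_ℂ = ⟪y, x⟫_ℂ)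
    (hCinv : ∀ x, C (C x) = x)
    (T : H →L[ℂ] H)
    (hT : ∀ h : H, ⟪C h, T h⟫_ℂ = 0) :
    ∀ x, C (T (C x)) = -(ContinuousLinearMap.adjoint T) x := by
  intro x
  refine ext_inner_right ℂ fun v => ?_
  calc ⟪C (T (C x)), v⟫_ℂ = ⟪C v, T (C x)⟫_ℂ := inner_map_left_symm hCinner hCinv _ _
    _ = -⟪C (C x), T v⟫_ℂ :=
      eq_neg_of_add_eq_zero_left (inner_map_left_apply_add_swap_eq_zero hCadd T hT v (C x))
    _ = ⟪-(ContinuousLinearMap.adjoint T) x, v⟫_ℂ := by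
      rw [inner_neg_left, ContinuousLinearMap.adjoint_inner_left, hCinv]

theorem stmt7 {H : Type*} [NormedAddCommGroup H] [InnerProductSpace ℂ H] [CompleteSpace H]
    (C : H → H)
    (hCadd : ∀ x y, C (x + y) = C x + C y)
    (hCsmul : ∀ (a : ℂ) (x : H), C (a • x) = (starRingEnd ℂ) a • C x)
    (hCinner : ∀ x y : H, ⟪C x, C y⟫_ℂ = ⟪y, x⟫_ℂ)
    (hCinv : ∀ x, C (C x) = x)
    (T : H →L[ℂ] H)
    (hT : ∀ h : H, ⟪C h, T h⟫_ℂ = 0) :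
    ∀ x, C (T (C x)) = -(ContinuousLinearMap.adjoint T) x :=
  stmt7_general C hCadd hCinner hCinv T hT
end

section
/- Let C be a conjugation on a complex Hilbert space H and A ∈ B(H). Then dist(A, C^s) ≤ 3·sup{|⟨Ah, Ch⟩| : ‖h‖ ≤ 1}, i.e., the subspace of skew-C symmetric operators is hyperreflexive with constant at most 3. -/
/-!
Split `A = T + S` with `T = (A - C A* C) / 2`, which is skew-`C`-symmetric, and
`S = (A + C A* C) / 2`. The form `(x, y) ↦ ⟪C y, S x⟫` is complex bilinear and symmetric, and its
quadratic form is `h ↦ ⟪C h, A h⟫`. Polarization and the parallelogram law then bound `‖S‖` by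
`β = sup_{‖h‖ ≤ 1} |⟪C h, A h⟫|`, whence `dist(A, C^s) ≤ ‖A - T‖ = ‖S‖ ≤ β`.
-/

open scoped InnerProductSpace ComplexConjugate InnerProduct

open ContinuousLinearMap

noncomputable section Conjugation

variable {H : Type*} [NormedAddCommGroup H] [InnerProductSpace ℂ H]

theorem norm_eq_of_inner_map_map {C : H → H} (hC : ∀ x y, ⟪C x, C y⟫_ℂ = ⟪y, x⟫_ℂ) (x : H) :
    ‖C x‖ = ‖x‖ := by
  rw [norm_eq_sqrt_re_inner (𝕜 := ℂ) x, norm_eq_sqrt_re_inner (𝕜 := ℂ) (C x), hC x x]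

variable (C : H →L⋆[ℂ] H)

theorem inner_conj_smul_apply_smul (A : H →L[ℂ] H) (c : ℂ) (h : H) :
    ⟪C (c • h), A (c • h)⟫_ℂ = c ^ 2 * ⟪C h, A h⟫_ℂ := by
  rw [map_smulₛₗ, map_smul, inner_smul_left, inner_smul_right, Complex.conj_conj]
  ring

theorem norm_inner_conj_apply_le {A : H →L[ℂ] H} {β : ℝ}
    (hβ : ∀ u : H, ‖u‖ ≤ 1 → ‖⟪C u, A u⟫_ℂ‖ ≤ β) (h : H) :
    ‖⟪C h, A h⟫_ℂ‖ ≤ β * ‖h‖ ^ 2 := by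
  rcases eq_or_ne h 0 with rfl | hh
  · simp
  have hunit := hβ _ (norm_smul_inv_norm (𝕜 := ℂ) hh).le
  rwa [inner_conj_smul_apply_smul, norm_mul, norm_pow, norm_inv, RCLike.norm_ofReal, abs_norm,
    inv_pow, inv_mul_le_iff₀ (by positivity), mul_comm] at hunit

theorem bddAbove_norm_inner_conj_apply (A : H →L[ℂ] H) :
    BddAbove {r : ℝ | ∃ h : H, ‖h‖ ≤ 1 ∧ r = ‖⟪C h, A h⟫_ℂ‖} := by
  refine ⟨‖C‖ * ‖A‖, ?_⟩
  rintro r ⟨h, hh, rfl⟩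
  calc ‖⟪C h, A h⟫_ℂ‖ ≤ ‖C h‖ * ‖A h‖ := norm_inner_le_norm _ _
    _ ≤ (‖C‖ * ‖h‖) * (‖A‖ * ‖h‖) := by gcongr <;> exact le_opNorm _ _
    _ ≤ (‖C‖ * 1) * (‖A‖ * 1) := by gcongr
    _ = ‖C‖ * ‖A‖ := by ring

theorem inner_conj_polarization (A : H →L[ℂ] H) (x y : H) :
    ⟪C y, A x⟫_ℂ + ⟪C x, A y⟫_ℂ =
      (⟪C (x + y), A (x + y)⟫_ℂ - ⟪C (x - y), A (x - y)⟫_ℂ) / 2 := by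
  simp only [map_add, map_sub, inner_add_left, inner_add_right, inner_sub_left, inner_sub_right]
  ring

def conjBy (A : H →L[ℂ] H) : H →L[ℂ] H := (C.comp A).comp C

@[simp]
theorem conjBy_apply (A : H →L[ℂ] H) (x : H) : conjBy C A x = C (A (C x)) := rfl

variable [CompleteSpace H]

theorem adjoint_conjBy {C : H →L⋆[ℂ] H} (hCinner : ∀ x y, ⟪C x, C y⟫_ℂ = ⟪y, x⟫_ℂ)
    (hCinv : ∀ x, C (C x) = x) (A : H →L[ℂ] H) :
    (conjBy C A)† = conjBy C (A†) := by
  refine ((eq_adjoint_iff (conjBy C (A†)) (conjBy C A)).2 fun x y => ?_).symm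
  calc ⟪C ((A†) (C x)), y⟫_ℂ = ⟪C ((A†) (C x)), C (C y)⟫_ℂ := by rw [hCinv]
    _ = ⟪C y, (A†) (C x)⟫_ℂ := hCinner _ _
    _ = ⟪A (C y), C x⟫_ℂ := adjoint_inner_right _ _ _
    _ = ⟪C (C x), C (A (C y))⟫_ℂ := (hCinner _ _).symm
    _ = ⟪x, C (A (C y))⟫_ℂ := by rw [hCinv]

def skewPart (A : H →L[ℂ] H) : H →L[ℂ] H := (2⁻¹ : ℂ) • (A - conjBy C (A†))

def symmPart (A : H →L[ℂ] H) : H →L[ℂ] H := (2⁻¹ : ℂ) • (A + conjBy C (A†))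

theorem sub_skewPart (A : H →L[ℂ] H) : A - skewPart C A = symmPart C A := by
  ext x
  simp only [skewPart, symmPart, sub_apply, add_apply, smul_apply]
  module

theorem conjBy_skewPart {C : H →L⋆[ℂ] H} (hCinner : ∀ x y, ⟪C x, C y⟫_ℂ = ⟪y, x⟫_ℂ)
    (hCinv : ∀ x, C (C x) = x) (A : H →L[ℂ] H) :
    conjBy C (skewPart C A) = -(skewPart C A)† := by
  ext x
  simp only [skewPart, conjBy_apply, smul_apply, sub_apply, hCinv, map_smulₛₗ, map_inv₀, map_sub,
    adjoint_conjBy hCinner hCinv, adjoint_adjoint, neg_apply]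
  rw [← smul_neg, neg_sub]

theorem inner_conj_symmPart {C : H →L⋆[ℂ] H} (hCinner : ∀ x y, ⟪C x, C y⟫_ℂ = ⟪y, x⟫_ℂ)
    (A : H →L[ℂ] H) (x y : H) :
    ⟪C y, symmPart C A x⟫_ℂ = (⟪C y, A x⟫_ℂ + ⟪C x, A y⟫_ℂ) / 2 := by
  have hsandwich : ⟪C y, C ((A†) (C x))⟫_ℂ = ⟪C x, A y⟫_ℂ := by
    rw [hCinner, adjoint_inner_left]
  simp only [symmPart, smul_apply, add_apply, conjBy_apply, inner_smul_right, inner_add_right,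
    hsandwich]
  ring

theorem norm_symmPart_le {C : H →L⋆[ℂ] H} (hCinner : ∀ x y, ⟪C x, C y⟫_ℂ = ⟪y, x⟫_ℂ)
    (hCinv : ∀ x, C (C x) = x) {A : H →L[ℂ] H} {β : ℝ} (hβ : 0 ≤ β)
    (hA : ∀ h : H, ‖⟪C h, A h⟫_ℂ‖ ≤ β * ‖h‖ ^ 2) : ‖symmPart C A‖ ≤ β := by
  refine opNorm_le_of_re_inner_le hβ fun x y hx hy => ?_
  have hCy : ‖C y‖ = 1 := (norm_eq_of_inner_map_map hCinner y).trans hy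
  calc RCLike.re ⟪symmPart C A x, y⟫_ℂ ≤ ‖⟪C (C y), symmPart C A x⟫_ℂ‖ := by
        rw [hCinv, ← norm_inner_symm]; exact RCLike.re_le_norm _
    _ = ‖⟪C (x + C y), A (x + C y)⟫_ℂ - ⟪C (x - C y), A (x - C y)⟫_ℂ‖ / 4 := by
        rw [inner_conj_symmPart hCinner, inner_conj_polarization, norm_div, norm_div]
        norm_num; ring
    _ ≤ (β * ‖x + C y‖ ^ 2 + β * ‖x - C y‖ ^ 2) / 4 := by
        grw [norm_sub_le, hA, hA]
    _ = β := by
        have hpar := parallelogram_law_with_norm ℂ x (C y)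
        rw [hx, hCy] at hpar
        linear_combination β / 4 * hpar

end Conjugation

theorem stmt12 {H : Type*} [NormedAddCommGroup H] [InnerProductSpace ℂ H] [CompleteSpace H]
    (C : H → H)
    (hCadd : ∀ x y, C (x + y) = C x + C y)
    (hCsmul : ∀ (a : ℂ) (x : H), C (a • x) = (starRingEnd ℂ) a • C x)
    (hCinner : ∀ x y : H, ⟪C x, C y⟫_ℂ = ⟪y, x⟫_ℂ)
    (hCinv : ∀ x, C (C x) = x)
    (A : H →L[ℂ] H) :
    Metric.infDist A
        {T : H →L[ℂ] H | ∀ x, C (T (C x)) = -(ContinuousLinearMap.adjoint T) x} ≤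
      3 * sSup {r : ℝ | ∃ h : H, ‖h‖ ≤ 1 ∧ r = ‖⟪C h, A h⟫_ℂ‖} := by
  let Cc : H →L⋆[ℂ] H :=
    LinearMap.mkContinuous { toFun := C, map_add' := hCadd, map_smul' := hCsmul } 1
      fun x => (one_mul ‖x‖).symm ▸ (norm_eq_of_inner_map_map hCinner x).le
  have hCcinner : ∀ x y, ⟪Cc x, Cc y⟫_ℂ = ⟪y, x⟫_ℂ := hCinner
  have hCcinv : ∀ x, Cc (Cc x) = x := hCinv
  set β := sSup {r : ℝ | ∃ h : H, ‖h‖ ≤ 1 ∧ r = ‖⟪C h, A h⟫_ℂ‖}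
  have hβ : ∀ u : H, ‖u‖ ≤ 1 → ‖⟪Cc u, A u⟫_ℂ‖ ≤ β :=
    fun u hu => le_csSup (bddAbove_norm_inner_conj_apply Cc A) ⟨u, hu, rfl⟩
  have hβ0 : 0 ≤ β := (norm_nonneg _).trans (hβ 0 (by simp))
  have hskew : skewPart Cc A ∈ {T : H →L[ℂ] H | ∀ x, C (T (C x)) = -(T†) x} :=
    DFunLike.congr_fun (conjBy_skewPart hCcinner hCcinv A)
  calc Metric.infDist A {T : H →L[ℂ] H | ∀ x, C (T (C x)) = -(T†) x}
      ≤ dist A (skewPart Cc A) := Metric.infDist_le_dist_of_mem hskew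
    _ = ‖symmPart Cc A‖ := by rw [dist_eq_norm, sub_skewPart]
    _ ≤ β := norm_symmPart_le hCcinner hCcinv hβ0 (norm_inner_conj_apply_le Cc hβ)
    _ ≤ 3 * β := by linarith
end

section
/- Let C̃ be the conjugation on H ⊕ H defined by C̃(f ⊕ g) = Cg ⊕ Cf, where C is a conjugation on H. An operator T ∈ B(H ⊕ H) with block matrix [[A, B],[D, E]] is skew-C̃ symmetric if and only if B and D are skew-C symmetric and E = −CA*C. -/
/-!
Writing `T = [[A, B], [D, E]]`, the identity `C̃ T C̃ = -T*` compares the two components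
`C (D (C g) + E (C f))` and `C (A (C g) + B (C f))` with those of `-T* (f ⊕ g)`. Taking `g = 0`
or `f = 0` separates the four blocks: the off-diagonal ones give skew-`C` symmetry of `B` and `D`,
the diagonal ones give `E = -C A* C` and `E* = -C A C`. The last equation is the adjoint of the
previous one, because `(C F C)* = C F* C` for any bounded `F`.
-/

open scoped InnerProductSpace

section Conjugation

variable {H : Type*} [NormedAddCommGroup H] [InnerProductSpace ℂ H] {C : H → H}

theorem inner_conj_left_comm (hCinner : ∀ x y : H, ⟪C x, C y⟫_ℂ = ⟪y, x⟫_ℂ)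
    (hCinv : ∀ x, C (C x) = x) (z w : H) : ⟪C z, w⟫_ℂ = ⟪C w, z⟫_ℂ := by
  rw [← hCinv w, hCinner, hCinv]

theorem inner_conj_right_comm (hCinner : ∀ x y : H, ⟪C x, C y⟫_ℂ = ⟪y, x⟫_ℂ)
    (hCinv : ∀ x, C (C x) = x) (z w : H) : ⟪z, C w⟫_ℂ = ⟪w, C z⟫_ℂ := by
  rw [← hCinv z, hCinner, hCinv]

theorem adjoint_apply_eq_conj_adjoint_conj [CompleteSpace H]
    (hCinner : ∀ x y : H, ⟪C x, C y⟫_ℂ = ⟪y, x⟫_ℂ) (hCinv : ∀ x, C (C x) = x)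
    {E F : H →L[ℂ] H} (hEF : ∀ x, E x = C (F (C x))) (y : H) :
    E.adjoint y = C (F.adjoint (C y)) := by
  refine ext_inner_left ℂ fun v => ?_
  rw [ContinuousLinearMap.adjoint_inner_right, hEF, inner_conj_left_comm hCinner hCinv,
    ← ContinuousLinearMap.adjoint_inner_left, inner_conj_right_comm hCinner hCinv]

end Conjugation

theorem stmt14_general {H : Type*} [NormedAddCommGroup H] [InnerProductSpace ℂ H] [CompleteSpace H]
    (C : H → H)
    (hCadd : ∀ x y, C (x + y) = C x + C y)
    (hCinner : ∀ x y : H, ⟪C x, C y⟫_ℂ = ⟪y, x⟫_ℂ)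
    (hCinv : ∀ x, C (C x) = x)
    (A B D E : H →L[ℂ] H) :
    -- the block operator T = [[A, B], [D, E]] on H ⊕ H is skew-C̃ symmetric,
    -- where C̃(f ⊕ g) = Cg ⊕ Cf and T* = [[A*, D*], [B*, E*]]
    ((∀ f g : H,
        C (D (C g) + E (C f)) =
          -((ContinuousLinearMap.adjoint A) f + (ContinuousLinearMap.adjoint D) g) ∧
        C (A (C g) + B (C f)) =
          -((ContinuousLinearMap.adjoint B) f + (ContinuousLinearMap.adjoint E) g)) ↔
      ((∀ x, C (B (C x)) = -(ContinuousLinearMap.adjoint B) x) ∧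
        (∀ x, C (D (C x)) = -(ContinuousLinearMap.adjoint D) x) ∧
        (∀ x, E x = -C ((ContinuousLinearMap.adjoint A) (C x))))) := by
  let Cₐ : H →+ H := AddMonoidHom.mk' C hCadd
  have hC0 : C 0 = 0 := Cₐ.map_zero
  have hCneg (x : H) : C (-x) = -C x := Cₐ.map_neg x
  constructor
  · intro h
    refine ⟨fun x => by simpa [hC0] using (h x 0).2, fun x => by simpa [hC0] using (h 0 x).1,
      fun x => ?_⟩
    have hA : C (E x) = -A.adjoint (C x) := by simpa [hC0, hCinv] using (h (C x) 0).1
    rw [← hCneg, ← hA, hCinv]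
  · rintro ⟨hB, hD, hE⟩ f g
    have hEC : C (E (C f)) = -A.adjoint f := by rw [hE, hCinv, hCneg, hCinv]
    have hE' : ∀ x, E x = C ((-A.adjoint) (C x)) := fun x => by
      rw [hE, neg_apply, hCneg]
    have hAC : C (A (C g)) = -E.adjoint g := by
      rw [adjoint_apply_eq_conj_adjoint_conj hCinner hCinv hE', map_neg,
        ContinuousLinearMap.adjoint_adjoint, neg_apply, hCneg, neg_neg]
    constructor
    · rw [hCadd, hD, hEC, neg_add, add_comm]
    · rw [hCadd, hB, hAC, neg_add, add_comm]

theorem stmt14 {H : Type*} [NormedAddCommGroup H] [InnerProductSpace ℂ H] [CompleteSpace H]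
    (C : H → H)
    (hCadd : ∀ x y, C (x + y) = C x + C y)
    (hCsmul : ∀ (a : ℂ) (x : H), C (a • x) = (starRingEnd ℂ) a • C x)
    (hCinner : ∀ x y : H, ⟪C x, C y⟫_ℂ = ⟪y, x⟫_ℂ)
    (hCinv : ∀ x, C (C x) = x)
    (A B D E : H →L[ℂ] H) :
    -- the block operator T = [[A, B], [D, E]] on H ⊕ H is skew-C̃ symmetric,
    -- where C̃(f ⊕ g) = Cg ⊕ Cf and T* = [[A*, D*], [B*, E*]]
    ((∀ f g : H,
        C (D (C g) + E (C f)) =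
          -((ContinuousLinearMap.adjoint A) f + (ContinuousLinearMap.adjoint D) g) ∧
        C (A (C g) + B (C f)) =
          -((ContinuousLinearMap.adjoint B) f + (ContinuousLinearMap.adjoint E) g)) ↔
      ((∀ x, C (B (C x)) = -(ContinuousLinearMap.adjoint B) x) ∧
        (∀ x, C (D (C x)) = -(ContinuousLinearMap.adjoint D) x) ∧
        (∀ x, E x = -C ((ContinuousLinearMap.adjoint A) (C x))))) :=
  stmt14_general C hCadd hCinner hCinv A B D E
end

section
/- Let C₁ be the conjugation on ℂ³ given by C₁(x₁, x₂, x₃) = (conj(x₃), conj(x₂), conj(x₁)). A 3×3 complex matrix T is skew-C₁ symmetric if and only if T has the form [[a, b, 0], [c, 0, −b], [0, −c, −a]] for some a, b, c ∈ ℂ. -/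
/-!
If `C v = star (v ∘ σ)` for an involution `σ` of the index set, then `C T C` is the matrix
`(T_{σ i, σ j})` with conjugated entries, so `C T C = -Tᴴ` says exactly that
`T_{σ i, σ j} = -T_{j i}`. For `σ = Fin.rev` on `Fin 3` this pairs the entries of `T` across the
anti-diagonal with a sign change and forces the anti-diagonal itself to vanish.
-/

open scoped ComplexConjugate Matrix

namespace Matrix

variable {ι R : Type*} [Fintype ι] [CommRing R] [StarRing R]

def permConj (σ : ι → ι) (v : ι → R) : ι → R := fun i => star (v (σ i))

def IsSkewConjSymm (C : (ι → R) → ι → R) (T : Matrix ι ι R) : Prop :=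
  ∀ v, C (T *ᵥ C v) = -(Tᴴ *ᵥ v)

theorem permConj_mulVec_permConj {σ : ι → ι} (hσ : Function.Involutive σ)
    (T : Matrix ι ι R) (v : ι → R) :
    permConj σ (T *ᵥ permConj σ v) = (T.submatrix σ σ).map star *ᵥ v := by
  funext i
  simp only [permConj, mulVec, dotProduct, star_sum, star_mul, star_star, map_apply,
    submatrix_apply]
  rw [← Equiv.sum_comp (hσ.toPerm σ)]
  simp [hσ (_ : ι), mul_comm]

theorem isSkewConjSymm_permConj_iff {σ : ι → ι} (hσ : Function.Involutive σ)
    (T : Matrix ι ι R) :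
    IsSkewConjSymm (permConj σ) T ↔ ∀ i j, T (σ i) (σ j) = -T j i := by
  simp only [IsSkewConjSymm, permConj_mulVec_permConj hσ, ← neg_mulVec, ← ext_iff_mulVec,
    ← ext_iff]
  simp [conjTranspose_apply, ← star_neg, star_inj]

end Matrix

theorem Matrix.skew_persymmetric_fin_three_iff {R : Type*} [AddGroup R] [IsAddTorsionFree R]
    (T : Matrix (Fin 3) (Fin 3) R) :
    (∀ i j : Fin 3, T i.rev j.rev = -T j i) ↔
      ∃ a b c : R, T = !![a, b, 0; c, 0, -b; 0, -c, -a] := by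
  constructor
  · intro h
    have h02 : T 0 2 = 0 := self_eq_neg.mp (h 2 0)
    have h11 : T 1 1 = 0 := self_eq_neg.mp (h 1 1)
    have h20 : T 2 0 = 0 := self_eq_neg.mp (h 0 2)
    refine ⟨T 0 0, T 0 1, T 1 0, ?_⟩
    ext i j
    fin_cases i <;> fin_cases j <;> simp [h02, h11, h20, ← h 1 0, ← h 0 1, ← h 0 0]
  · rintro ⟨a, b, c, rfl⟩ i j
    fin_cases i <;> fin_cases j <;> simp

theorem stmt15 (T : Matrix (Fin 3) (Fin 3) ℂ)
    (C₁ : (Fin 3 → ℂ) → (Fin 3 → ℂ))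
    (hC₁ : ∀ (v : Fin 3 → ℂ) (i : Fin 3), C₁ v i = conj (v i.rev)) :
    (∀ v : Fin 3 → ℂ, C₁ (T.mulVec (C₁ v)) = -(Tᴴ.mulVec v)) ↔
      ∃ a b c : ℂ, T = !![a, b, 0; c, 0, -b; 0, -c, -a] := by
  have hC : C₁ = Matrix.permConj Fin.rev := funext fun v => funext (hC₁ v)
  subst hC
  exact (Matrix.isSkewConjSymm_permConj_iff Fin.rev_involutive T).trans
    (Matrix.skew_persymmetric_fin_three_iff T)
end
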